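/- arXiv:2009.12848 — 5 statements merged into one kernel-verified Lean document; each statement's English description precedes it below -/
import Mathlib

section
/- For all switching rates λ, μ ∈ (0,∞), every t > 0 and all u, h ∈ [0,1], the one-step rate function satisfies I_{1,t}(u,h) ≤ max{ −log p01(t), −log(1 − p11(t)) } < ∞. -/
noncomputable section

open MeasureTheory Real Filter

/-- Probability that an initially inactive edge is active at time `t`. -/
def p01 (lam mu t : ℝ) : ℝ := (lam - lam * Real.exp (-(t * (lam + mu)))) / (lam + mu)

/-- Probability that an initially active edge is active at time `t`. -/
def p11 (lam mu t : ℝ) : ℝ := (lam + mu * Real.exp (-(t * (lam + mu)))) / (lam + mu)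

/-- The cumulant-type function `J_{t,v}(u)`. -/
def Jfun (lam mu t v u : ℝ) : ℝ :=
  u * Real.log (1 - p11 lam mu t + Real.exp v * p11 lam mu t) +
  (1 - u) * Real.log (1 - p01 lam mu t + Real.exp v * p01 lam mu t)

/-- The one-step rate function `I_{1,t}(u,x) = sup_v [v x - J_{t,v}(u)]`. -/
def I1 (lam mu t u x : ℝ) : ℝ := ⨆ v : ℝ, (v * x - Jfun lam mu t v u)

theorem stmt_0 (lam mu t u h : ℝ) (hlam : 0 < lam) (hmu : 0 < mu) (ht : 0 < t)
    (hu : u ∈ Set.Icc (0:ℝ) 1) (hh : h ∈ Set.Icc (0:ℝ) 1) :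
    BddAbove (Set.range fun v : ℝ => v * h - Jfun lam mu t v u) ∧
    I1 lam mu t u h ≤ max (-Real.log (p01 lam mu t)) (-Real.log (1 - p11 lam mu t)) := by
  obtain ⟨hu0, hu1⟩ := hu
  obtain ⟨hh0, hh1⟩ := hh
  have hspos : 0 < lam + mu := by linarith
  set E := Real.exp (-(t * (lam + mu))) with hEdef
  have hE0 : 0 < E := Real.exp_pos _
  have hE1 : E < 1 := by
    rw [hEdef]
    apply Real.exp_lt_one_iff.mpr
    nlinarith
  set q0 := p01 lam mu t with hq0
  set q1 := p11 lam mu t with hq1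
  have hq0pos : 0 < q0 := by
    rw [hq0, p01]
    apply div_pos _ hspos
    nlinarith
  have hq1pos : 0 < q1 := by
    rw [hq1, p11]
    apply div_pos _ hspos
    nlinarith
  have hq1lt1 : q1 < 1 := by
    rw [hq1, p11, div_lt_one hspos]
    nlinarith
  have hq0lt1 : q0 < 1 := by
    rw [hq0, p01, div_lt_one hspos]
    nlinarith
  have hle : q0 ≤ q1 := by
    rw [hq0, hq1, p01, p11, div_le_div_iff₀ hspos hspos, ← hEdef]
    nlinarith [mul_pos (mul_pos hE0 hspos) hspos]
  set M := max (-Real.log q0) (-Real.log (1 - q1)) with hM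
  have key : ∀ v : ℝ, v * h - Jfun lam mu t v u ≤ M := by
    intro v
    have hev : 0 < Real.exp v := Real.exp_pos v
    have hA : (0:ℝ) < 1 - q1 + Real.exp v * q1 := by nlinarith
    have hB : (0:ℝ) < 1 - q0 + Real.exp v * q0 := by nlinarith
    rw [Jfun, ← hq0, ← hq1]
    rcases le_or_gt 0 v with hv | hv
    · -- v ≥ 0
      have hlog1 : v + Real.log q1 ≤ Real.log (1 - q1 + Real.exp v * q1) := by
        have : Real.exp v * q1 ≤ 1 - q1 + Real.exp v * q1 := by nlinarith
        calc v + Real.log q1 = Real.log (Real.exp v * q1) := by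
              rw [Real.log_mul (ne_of_gt hev) (ne_of_gt hq1pos), Real.log_exp]
          _ ≤ _ := Real.log_le_log (by positivity) this
      have hlog0 : v + Real.log q0 ≤ Real.log (1 - q0 + Real.exp v * q0) := by
        have : Real.exp v * q0 ≤ 1 - q0 + Real.exp v * q0 := by nlinarith
        calc v + Real.log q0 = Real.log (Real.exp v * q0) := by
              rw [Real.log_mul (ne_of_gt hev) (ne_of_gt hq0pos), Real.log_exp]
          _ ≤ _ := Real.log_le_log (by positivity) this
      have hlogle : Real.log q0 ≤ Real.log q1 := Real.log_le_log hq0pos hle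
      have h1 : u * (v + Real.log q1) ≤ u * Real.log (1 - q1 + Real.exp v * q1) :=
        mul_le_mul_of_nonneg_left hlog1 hu0
      have h2 : (1 - u) * (v + Real.log q0) ≤
          (1 - u) * Real.log (1 - q0 + Real.exp v * q0) :=
        mul_le_mul_of_nonneg_left hlog0 (by linarith)
      have hvh : v * h ≤ v := by nlinarith
      have hMle : -Real.log q0 ≤ M := le_max_left _ _
      have e1 : u * (v + Real.log q1) = u * v + u * Real.log q1 := by ring
      have e2 : (1 - u) * (v + Real.log q0)
          = v + Real.log q0 - u * v - u * Real.log q0 := by ring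
      have hmul : u * Real.log q0 ≤ u * Real.log q1 :=
        mul_le_mul_of_nonneg_left hlogle hu0
      linarith [h1, h2, hvh, hMle, e1, e2, hmul]
    · -- v < 0
      have hlog1 : Real.log (1 - q1) ≤ Real.log (1 - q1 + Real.exp v * q1) := by
        apply Real.log_le_log (by linarith)
        nlinarith
      have hlog0 : Real.log (1 - q0) ≤ Real.log (1 - q0 + Real.exp v * q0) := by
        apply Real.log_le_log (by linarith)
        nlinarith
      have hlogle : Real.log (1 - q1) ≤ Real.log (1 - q0) :=
        Real.log_le_log (by linarith) (by linarith)
      have h1 : u * Real.log (1 - q1) ≤ u * Real.log (1 - q1 + Real.exp v * q1) :=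
        mul_le_mul_of_nonneg_left hlog1 hu0
      have h2 : (1 - u) * Real.log (1 - q0) ≤
          (1 - u) * Real.log (1 - q0 + Real.exp v * q0) :=
        mul_le_mul_of_nonneg_left hlog0 (by linarith)
      have hvh : v * h ≤ 0 := mul_nonpos_of_nonpos_of_nonneg (le_of_lt hv) hh0
      have hMle : -Real.log (1 - q1) ≤ M := le_max_right _ _
      have e1 : u * Real.log (1 - q1) + (1 - u) * Real.log (1 - q1)
          = Real.log (1 - q1) := by ring
      have hmul : (1 - u) * Real.log (1 - q1) ≤ (1 - u) * Real.log (1 - q0) :=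
        mul_le_mul_of_nonneg_left hlogle (by linarith)
      linarith [h1, h2, hvh, hMle, e1, hmul]
  have hbdd : BddAbove (Set.range fun v : ℝ => v * h - Jfun lam mu t v u) := by
    refine ⟨M, ?_⟩
    rintro x ⟨v, rfl⟩
    exact key v
  exact ⟨hbdd, ciSup_le key⟩
end
end

section
/- For all switching rates λ, μ ∈ (0,∞) and every t > 0, the map (u,h) ↦ I_{1,t}(u,h) is uniformly continuous on [0,1] × [0,1]; equivalently, with Δ_I(η,ε) := max over u,h ∈ [0,1], u' ∈ [u−η, u+η] ∩ [0,1], h' ∈ [h−ε, h+ε] ∩ [0,1] of |I_{1,t}(u,h) − I_{1,t}(u',h')|, one has Δ_I(η,ε) → 0 as (η,ε) → (0,0). -/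
noncomputable section

open MeasureTheory Real Filter

/-!
`I_{1,t}(u, x)` is affine in `u` inside the supremum, and both cumulant generating functions
stay within a bounded distance of `max v 0`, so `I_{1,t}` is Lipschitz in `u`. In `x` it is a
supremum of affine functions, bounded above on `[0,1]`, hence convex and lower semicontinuous
there; a convex function on a closed interval is bounded above by its chord, which gives upper
semicontinuity at the endpoints, so it is continuous. Separate continuity in `x` and uniform
Lipschitz continuity in `u` give joint continuity on the compact square, and Heine–Cantor
gives uniform continuity.
-/

open Set

section ConvexOnInterval

variable {f : ℝ → ℝ} {a b : ℝ}

theorem ConvexOn.mul_le_chord (hf : ConvexOn ℝ (Icc a b) f) {y : ℝ} (hy : y ∈ Icc a b) :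
    (b - a) * f y ≤ (b - y) * f a + (y - a) * f b := by
  rcases eq_or_lt_of_le (hy.1.trans hy.2) with rfl | hab
  · obtain rfl : y = a := le_antisymm hy.2 hy.1
    simp
  have hba : 0 < b - a := sub_pos.2 hab
  have hseg := hf.2 (left_mem_Icc.2 hab.le) (right_mem_Icc.2 hab.le)
    (div_nonneg (sub_nonneg.2 hy.2) hba.le) (div_nonneg (sub_nonneg.2 hy.1) hba.le)
    (by rw [← add_div, div_eq_one_iff_eq hba.ne']; ring)
  have hy_eq : ((b - y) / (b - a)) • a + ((y - a) / (b - a)) • b = y := by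
    simp only [smul_eq_mul]; field_simp; ring
  rwa [hy_eq, smul_eq_mul, smul_eq_mul, div_mul_eq_mul_div, div_mul_eq_mul_div, ← add_div,
    le_div_iff₀' hba] at hseg

theorem UpperSemicontinuousWithinAt.of_le_of_continuousWithinAt {α : Type*} [TopologicalSpace α]
    {f g : α → ℝ} {s : Set α} {x : α} (hg : ContinuousWithinAt g s x) (hfg : ∀ y ∈ s, f y ≤ g y)
    (hx : g x = f x) : UpperSemicontinuousWithinAt f s x := fun c hc => by
  filter_upwards [hg.eventually_lt_const (by rwa [hx]), self_mem_nhdsWithin] with y hy hys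
  exact (hfg y hys).trans_lt hy

theorem ConvexOn.upperSemicontinuousWithinAt_Icc (hf : ConvexOn ℝ (Icc a b) f) (hab : a < b)
    {c : ℝ} (hc : c = a ∨ c = b) : UpperSemicontinuousWithinAt f (Icc a b) c := by
  have hba : 0 < b - a := sub_pos.2 hab
  let chord : ℝ → ℝ := fun y => ((b - y) * f a + (y - a) * f b) / (b - a)
  refine .of_le_of_continuousWithinAt (g := chord) (by fun_prop) (fun y hy => ?_) ?_
  · exact (le_div_iff₀' hba).2 (hf.mul_le_chord hy)
  · rcases hc with rfl | rfl <;> simp only [chord] <;> field_simp <;> ring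

theorem ConvexOn.continuousOn_Icc_of_lowerSemicontinuousOn (hf : ConvexOn ℝ (Icc a b) f)
    (hlsc : LowerSemicontinuousOn f (Icc a b)) : ContinuousOn f (Icc a b) := by
  rcases lt_or_ge a b with hab | hba
  · have hend : ∀ c, (c = a ∨ c = b) → ContinuousWithinAt f (Icc a b) c := fun c hc =>
      continuousWithinAt_iff_lower_upperSemicontinuousWithinAt.2
        ⟨hlsc c (by rcases hc with rfl | rfl <;> simp [hab.le]),
          hf.upperSemicontinuousWithinAt_Icc hab hc⟩
    exact hf.continuousOn_Icc hab ((continuousWithinAt_Icc_iff_Ici hab).1 (hend a (.inl rfl)))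
      ((continuousWithinAt_Icc_iff_Iic hab).1 (hend b (.inr rfl)))
  · exact (subsingleton_Icc_of_ge hba).continuousOn f

end ConvexOnInterval

section MixedRate

def mixedRate (A B : ℝ → ℝ) (u x : ℝ) : ℝ := ⨆ v : ℝ, (v * x - (u * B v + (1 - u) * A v))

variable {A B : ℝ → ℝ} {C : ℝ} (hA : ∀ v, |A v - max v 0| ≤ C) (hB : ∀ v, |B v - max v 0| ≤ C)
include hA hB

theorem sub_mixedCGF_le {u x : ℝ} (hu : u ∈ Icc (0 : ℝ) 1) (hx : x ∈ Icc (0 : ℝ) 1) (v : ℝ) :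
    v * x - (u * B v + (1 - u) * A v) ≤ C := by
  have hvx : v * x ≤ max v 0 := by
    rcases le_total 0 v with hv | hv
    · nlinarith [le_max_left v 0, hx.2]
    · nlinarith [le_max_right v 0, hx.1]
  have hAv := (abs_le.1 (hA v)).1
  have hBv := (abs_le.1 (hB v)).1
  nlinarith [hu.1, hu.2]

theorem bddAbove_sub_mixedCGF {u x : ℝ} (hu : u ∈ Icc (0 : ℝ) 1) (hx : x ∈ Icc (0 : ℝ) 1) :
    BddAbove (range fun v => v * x - (u * B v + (1 - u) * A v)) :=
  ⟨C, forall_mem_range.2 (sub_mixedCGF_le hA hB hu hx)⟩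

theorem mixedRate_le_add_mul {u u' x : ℝ} (hu' : u' ∈ Icc (0 : ℝ) 1) (hx : x ∈ Icc (0 : ℝ) 1) : mixedRate A B u x ≤ mixedRate A B u' x + 2 * C * |u - u'| := by
  refine ciSup_le fun v => ?_
  have hle : v * x - (u' * B v + (1 - u') * A v) ≤ mixedRate A B u' x :=
    le_ciSup (bddAbove_sub_mixedCGF hA hB hu' hx) v
  have hBA : |B v - A v| ≤ 2 * C := by
    have := abs_sub_le (B v) (max v 0) (A v)
    rw [abs_sub_comm (max v 0)] at this
    linarith [hA v, hB v]
  have hcross : (u' - u) * (B v - A v) ≤ 2 * C * |u - u'| := by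
    calc (u' - u) * (B v - A v) ≤ |u - u'| * |B v - A v| := by
          rw [abs_sub_comm u, ← abs_mul]; exact le_abs_self _
      _ ≤ |u - u'| * (2 * C) := by gcongr
      _ = 2 * C * |u - u'| := mul_comm _ _
  linarith

theorem lipschitzOnWith_mixedRate {x : ℝ} (hx : x ∈ Icc (0 : ℝ) 1) :
    LipschitzOnWith (2 * C).toNNReal (fun u => mixedRate A B u x) (Icc 0 1) :=
  .of_le_add_mul' _ fun _ _ _ hu' => by
    simpa only [Real.dist_eq] using mixedRate_le_add_mul hA hB hu' hx

theorem convexOn_mixedRate {u : ℝ} (hu : u ∈ Icc (0 : ℝ) 1) :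
    ConvexOn ℝ (Icc 0 1) (mixedRate A B u) := by
  refine ⟨convex_Icc 0 1, fun x hx y hy a b ha hb hab => ciSup_le fun v => ?_⟩
  have hxv := le_ciSup (bddAbove_sub_mixedCGF hA hB hu hx) v
  have hyv := le_ciSup (bddAbove_sub_mixedCGF hA hB hu hy) v
  have hsplit : v * (a • x + b • y) - (u * B v + (1 - u) * A v) =
      a * (v * x - (u * B v + (1 - u) * A v)) + b * (v * y - (u * B v + (1 - u) * A v)) := by
    simp only [smul_eq_mul]; linear_combination (u * B v + (1 - u) * A v) * hab
  rw [hsplit, smul_eq_mul, smul_eq_mul]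
  exact add_le_add (mul_le_mul_of_nonneg_left hxv ha) (mul_le_mul_of_nonneg_left hyv hb)

theorem lowerSemicontinuousOn_mixedRate {u : ℝ} (hu : u ∈ Icc (0 : ℝ) 1) :
    LowerSemicontinuousOn (mixedRate A B u) (Icc 0 1) :=
  lowerSemicontinuousOn_ciSup (fun _ hx => bddAbove_sub_mixedCGF hA hB hu hx)
    fun _ => (by fun_prop : Continuous _).lowerSemicontinuous.lowerSemicontinuousOn _

theorem continuousOn_mixedRate :
    ContinuousOn (fun p : ℝ × ℝ => mixedRate A B p.1 p.2) (Icc 0 1 ×ˢ Icc 0 1) :=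
  continuousOn_prod_of_continuousOn_lipschitzOnWith _ (2 * C).toNNReal
    (fun _ hu => (convexOn_mixedRate hA hB hu).continuousOn_Icc_of_lowerSemicontinuousOn
      (lowerSemicontinuousOn_mixedRate hA hB hu))
    fun _ hx => lipschitzOnWith_mixedRate hA hB hx

end MixedRate

section Bernoulli

def bernoulliCGF (p v : ℝ) : ℝ := Real.log (1 - p + Real.exp v * p)

theorem abs_bernoulliCGF_sub_max_le {p : ℝ} (hp : p ∈ Ioo (0 : ℝ) 1) (v : ℝ) :
    |bernoulliCGF p v - max v 0| ≤ -Real.log p - Real.log (1 - p) := by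
  obtain ⟨hp0, hp1⟩ := hp
  have hev := Real.exp_pos v
  have hmax := Real.exp_pos (max v 0)
  have hv0 : Real.exp v ≤ Real.exp (max v 0) := Real.exp_le_exp.2 (le_max_left v 0)
  have h10 : 1 ≤ Real.exp (max v 0) := Real.one_le_exp (le_max_right v 0)
  have hupper : 1 - p + Real.exp v * p ≤ Real.exp (max v 0) := by nlinarith
  have hlower : Real.exp (max v 0) * p * (1 - p) ≤ 1 - p + Real.exp v * p := by
    rcases le_total 0 v with hv | hv
    · rw [max_eq_left hv]; nlinarith [mul_pos hev hp0]
    · rw [max_eq_right hv, Real.exp_zero]; nlinarith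
  have hlog_lower := Real.log_le_log (by positivity) hlower
  have hlog_upper := Real.log_le_log (by nlinarith) hupper
  rw [Real.log_mul (by positivity) (by linarith), Real.log_mul hmax.ne' hp0.ne',
    Real.log_exp] at hlog_lower
  rw [Real.log_exp] at hlog_upper
  rw [abs_le]
  constructor <;> unfold bernoulliCGF <;> linarith [Real.log_neg hp0 hp1,
    Real.log_neg (sub_pos.2 hp1) (by linarith)]

end Bernoulli

section TransitionProbabilities

variable {lam mu t : ℝ} (hlam : 0 < lam) (hmu : 0 < mu) (ht : 0 < t)
include hlam hmu ht

theorem p01_mem_Ioo : p01 lam mu t ∈ Ioo (0 : ℝ) 1 := by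
  have he : Real.exp (-(t * (lam + mu))) < 1 := Real.exp_lt_one_iff.2 (by nlinarith)
  have he0 := Real.exp_pos (-(t * (lam + mu)))
  exact ⟨div_pos (by nlinarith) (by linarith), (div_lt_one (by linarith)).2 (by nlinarith)⟩

theorem p11_mem_Ioo : p11 lam mu t ∈ Ioo (0 : ℝ) 1 := by
  have he : Real.exp (-(t * (lam + mu))) < 1 := Real.exp_lt_one_iff.2 (by nlinarith)
  have he0 := Real.exp_pos (-(t * (lam + mu)))
  exact ⟨div_pos (by nlinarith) (by linarith), (div_lt_one (by linarith)).2 (by nlinarith)⟩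

end TransitionProbabilities

/-- Uniform continuity of `(u,h) ↦ I_{1,t}(u,h)` on `[0,1] × [0,1]`. -/
theorem stmt_1 (lam mu t : ℝ) (hlam : 0 < lam) (hmu : 0 < mu) (ht : 0 < t) :
    ∀ ε > (0:ℝ), ∃ δ > (0:ℝ),
      ∀ u ∈ Set.Icc (0:ℝ) 1, ∀ h ∈ Set.Icc (0:ℝ) 1,
      ∀ u' ∈ Set.Icc (0:ℝ) 1, ∀ h' ∈ Set.Icc (0:ℝ) 1,
        |u - u'| ≤ δ → |h - h'| ≤ δ →
          |I1 lam mu t u h - I1 lam mu t u' h'| ≤ ε := by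
  set A := bernoulliCGF (p01 lam mu t)
  set B := bernoulliCGF (p11 lam mu t)
  have hI : ∀ u x, I1 lam mu t u x = mixedRate A B u x := fun _ _ => rfl
  set CA := -Real.log (p01 lam mu t) - Real.log (1 - p01 lam mu t)
  set CB := -Real.log (p11 lam mu t) - Real.log (1 - p11 lam mu t)
  have hA v : |A v - max v 0| ≤ max CA CB :=
    (abs_bernoulliCGF_sub_max_le (p01_mem_Ioo hlam hmu ht) v).trans (le_max_left _ _)
  have hB v : |B v - max v 0| ≤ max CA CB :=
    (abs_bernoulliCGF_sub_max_le (p11_mem_Ioo hlam hmu ht) v).trans (le_max_right _ _)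
  have hunif := Metric.uniformContinuousOn_iff_le.1 <|
    (isCompact_Icc.prod isCompact_Icc).uniformContinuousOn_of_continuous
      (continuousOn_mixedRate hA hB)
  intro ε hε
  obtain ⟨δ, hδ, hclose⟩ := hunif ε hε
  refine ⟨δ, hδ, fun u hu h hh u' hu' h' hh' hdu hdh => ?_⟩
  simpa only [hI, Real.dist_eq] using hclose (u, h) ⟨hu, hh⟩ (u', h') ⟨hu', hh'⟩
    (by simpa only [Prod.dist_eq, Real.dist_eq] using max_le hdu hdh)
end
end

section
/- For all switching rates λ, μ ∈ (0,∞), every t > 0 and every fixed h ∈ [0,1], the map u ↦ I_{1,t}(u,h) is convex on [0,1]; and for every fixed u ∈ [0,1], the map h ↦ I_{1,t}(u,h) is strictly convex on [0,1]. -/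
noncomputable section

open MeasureTheory Real Filter

lemma p01_mem (lam mu t : ℝ) (hlam : 0 < lam) (hmu : 0 < mu) (ht : 0 < t) :
    0 < p01 lam mu t ∧ p01 lam mu t < 1 := by
  have hs : 0 < t * (lam + mu) := by positivity
  have he1 : Real.exp (-(t * (lam + mu))) < 1 := by
    apply Real.exp_lt_one_iff.mpr; linarith
  have he0 : 0 < Real.exp (-(t * (lam + mu))) := Real.exp_pos _
  constructor
  · apply div_pos
    · nlinarith [mul_pos hlam he0]
    · linarith
  · simp only [p01]
    rw [div_lt_one (by linarith)]
    nlinarith [mul_pos hlam he0]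

lemma p11_mem (lam mu t : ℝ) (hlam : 0 < lam) (hmu : 0 < mu) (ht : 0 < t) :
    0 < p11 lam mu t ∧ p11 lam mu t < 1 := by
  have hs : 0 < t * (lam + mu) := by positivity
  have he1 : Real.exp (-(t * (lam + mu))) < 1 := by
    apply Real.exp_lt_one_iff.mpr; linarith
  have he0 : 0 < Real.exp (-(t * (lam + mu))) := Real.exp_pos _
  constructor
  · apply div_pos
    · nlinarith [mul_pos hmu he0]
    · linarith
  · simp only [p11]
    rw [div_lt_one (by linarith)]
    nlinarith [mul_lt_mul_of_pos_left he1 hmu]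

lemma cpos (p v : ℝ) (hp : 0 < p) (hp1 : p < 1) : 0 < 1 - p + Real.exp v * p := by
  nlinarith [Real.exp_pos v]

lemma log_lb1 (p v : ℝ) (hp : 0 < p) (hp1 : p < 1) :
    Real.log (1 - p) ≤ Real.log (1 - p + Real.exp v * p) := by
  apply Real.log_le_log (by linarith)
  nlinarith [Real.exp_pos v]

lemma log_lb2 (p v : ℝ) (hp : 0 < p) (hp1 : p < 1) :
    v + Real.log p ≤ Real.log (1 - p + Real.exp v * p) := by
  have h1 : Real.log (Real.exp v * p) = v + Real.log p := by
    rw [Real.log_mul (Real.exp_ne_zero v) hp.ne', Real.log_exp]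
  rw [← h1]
  apply Real.log_le_log (by positivity)
  linarith

/-- Lower bound for `Jfun` independent of `v`. -/
lemma Jfun_lb1 (lam mu t u v : ℝ) (hlam : 0 < lam) (hmu : 0 < mu) (ht : 0 < t)
    (hu : u ∈ Set.Icc (0:ℝ) 1) :
    u * Real.log (1 - p11 lam mu t) + (1 - u) * Real.log (1 - p01 lam mu t) ≤
      Jfun lam mu t v u := by
  obtain ⟨hq, hq1⟩ := p11_mem lam mu t hlam hmu ht
  obtain ⟨hp, hp1⟩ := p01_mem lam mu t hlam hmu ht
  have h1 := log_lb1 (p11 lam mu t) v hq hq1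
  have h2 := log_lb1 (p01 lam mu t) v hp hp1
  have := mul_le_mul_of_nonneg_left h1 hu.1
  have := mul_le_mul_of_nonneg_left h2 (by linarith [hu.2] : (0:ℝ) ≤ 1 - u)
  unfold Jfun; linarith

/-- Linear-in-`v` lower bound for `Jfun`. -/
lemma Jfun_lb2 (lam mu t u v : ℝ) (hlam : 0 < lam) (hmu : 0 < mu) (ht : 0 < t)
    (hu : u ∈ Set.Icc (0:ℝ) 1) :
    v + (u * Real.log (p11 lam mu t) + (1 - u) * Real.log (p01 lam mu t)) ≤
      Jfun lam mu t v u := by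
  obtain ⟨hq, hq1⟩ := p11_mem lam mu t hlam hmu ht
  obtain ⟨hp, hp1⟩ := p01_mem lam mu t hlam hmu ht
  have h1 := log_lb2 (p11 lam mu t) v hq hq1
  have h2 := log_lb2 (p01 lam mu t) v hp hp1
  have h3 := mul_le_mul_of_nonneg_left h1 hu.1
  have h4 := mul_le_mul_of_nonneg_left h2 (by linarith [hu.2] : (0:ℝ) ≤ 1 - u)
  unfold Jfun; nlinarith

lemma term_le (lam mu t u x v : ℝ) (hlam : 0 < lam) (hmu : 0 < mu) (ht : 0 < t)
    (hu : u ∈ Set.Icc (0:ℝ) 1) (hx : x ∈ Set.Icc (0:ℝ) 1) :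
    v * x - Jfun lam mu t v u ≤
      max (-(u * Real.log (1 - p11 lam mu t) + (1 - u) * Real.log (1 - p01 lam mu t)))
        (-(u * Real.log (p11 lam mu t) + (1 - u) * Real.log (p01 lam mu t))) := by
  rcases le_total v 0 with hv | hv
  · have h1 := Jfun_lb1 lam mu t u v hlam hmu ht hu
    have h2 : v * x ≤ 0 := mul_nonpos_iff.mpr (Or.inr ⟨hv, hx.1⟩)
    exact le_trans (by linarith) (le_max_left _ _)
  · have h1 := Jfun_lb2 lam mu t u v hlam hmu ht hu
    have h2 : v * x ≤ v := by nlinarith [hx.2]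
    exact le_trans (by linarith) (le_max_right _ _)

lemma bddAbove_I1 (lam mu t u x : ℝ) (hlam : 0 < lam) (hmu : 0 < mu) (ht : 0 < t)
    (hu : u ∈ Set.Icc (0:ℝ) 1) (hx : x ∈ Set.Icc (0:ℝ) 1) :
    BddAbove (Set.range fun v => v * x - Jfun lam mu t v u) := by
  refine ⟨max (-(u * Real.log (1 - p11 lam mu t) + (1 - u) * Real.log (1 - p01 lam mu t)))
    (-(u * Real.log (p11 lam mu t) + (1 - u) * Real.log (p01 lam mu t))), ?_⟩
  rintro _ ⟨v, rfl⟩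
  exact term_le lam mu t u x v hlam hmu ht hu hx

lemma Jfun_zero (lam mu t u : ℝ) : Jfun lam mu t 0 u = 0 := by
  have h : ∀ p : ℝ, 1 - p + Real.exp 0 * p = 1 := by
    intro p; rw [Real.exp_zero]; ring
  unfold Jfun
  rw [h, h, Real.log_one, mul_zero, mul_zero, add_zero]

lemma Jfun_cont (lam mu t u : ℝ) (hlam : 0 < lam) (hmu : 0 < mu) (ht : 0 < t) :
    Continuous fun v => Jfun lam mu t v u := by
  obtain ⟨hq, hq1⟩ := p11_mem lam mu t hlam hmu ht
  obtain ⟨hp, hp1⟩ := p01_mem lam mu t hlam hmu ht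
  unfold Jfun
  have h1 : Continuous fun v => 1 - p11 lam mu t + Real.exp v * p11 lam mu t := by
    continuity
  have h2 : Continuous fun v => 1 - p01 lam mu t + Real.exp v * p01 lam mu t := by
    continuity
  exact (continuous_const.mul (h1.log fun v => (cpos _ v hq hq1).ne')).add
    (continuous_const.mul (h2.log fun v => (cpos _ v hp hp1).ne'))

lemma Jfun_hasDeriv (lam mu t u x v : ℝ) (hlam : 0 < lam) (hmu : 0 < mu) (ht : 0 < t) :
    HasDerivAt (fun w => w * x - Jfun lam mu t w u)
      (x - (u * (Real.exp v * p11 lam mu t / (1 - p11 lam mu t + Real.exp v * p11 lam mu t)) +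
        (1 - u) * (Real.exp v * p01 lam mu t / (1 - p01 lam mu t + Real.exp v * p01 lam mu t)))) v := by
  obtain ⟨hq, hq1⟩ := p11_mem lam mu t hlam hmu ht
  obtain ⟨hp, hp1⟩ := p01_mem lam mu t hlam hmu ht
  have d1 : HasDerivAt (fun w => 1 - p11 lam mu t + Real.exp w * p11 lam mu t)
      (Real.exp v * p11 lam mu t) v :=
    ((Real.hasDerivAt_exp v).mul_const _).const_add _
  have d2 : HasDerivAt (fun w => 1 - p01 lam mu t + Real.exp w * p01 lam mu t)
      (Real.exp v * p01 lam mu t) v :=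
    ((Real.hasDerivAt_exp v).mul_const _).const_add _
  have d3 := (d1.log (cpos _ v hq hq1).ne').const_mul u
  have d4 := (d2.log (cpos _ v hp hp1).ne').const_mul (1 - u)
  have d5 := d3.add d4
  have d6 : HasDerivAt (fun w : ℝ => w * x) x v := hasDerivAt_mul_const x
  simp only [Jfun]
  exact d6.sub d5

lemma exists_max (lam mu t u z : ℝ) (hlam : 0 < lam) (hmu : 0 < mu) (ht : 0 < t)
    (hu : u ∈ Set.Icc (0:ℝ) 1) (hz : 0 < z) (hz1 : z < 1) :
    ∃ v : ℝ, ∀ w : ℝ, w * z - Jfun lam mu t w u ≤ v * z - Jfun lam mu t v u := by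
  set C : ℝ := u * Real.log (p11 lam mu t) + (1 - u) * Real.log (p01 lam mu t) with hC
  set D : ℝ := u * Real.log (1 - p11 lam mu t) + (1 - u) * Real.log (1 - p01 lam mu t) with hD
  set m : ℝ := min z (1 - z) with hm
  have hm0 : 0 < m := lt_min hz (by linarith)
  set R : ℝ := (|C| + |D| + 1) / m with hRdef
  have hR0 : 0 < R := div_pos (by positivity) hm0
  have hRm : R * m = |C| + |D| + 1 := div_mul_cancel₀ _ hm0.ne'
  have key : ∀ w : ℝ, w ∉ Set.Icc (-R) R → w * z - Jfun lam mu t w u < 0 := by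
    intro w hw
    rw [Set.mem_Icc, not_and_or, not_le, not_le] at hw
    rcases hw with h | h
    · have h1 := Jfun_lb1 lam mu t u w hlam hmu ht hu
      have hp1 : w * z ≤ (-R) * z := mul_le_mul_of_nonneg_right h.le hz.le
      have hp2 : R * m ≤ R * z :=
        mul_le_mul_of_nonneg_left (min_le_left _ _) hR0.le
      have hDabs : -|D| ≤ D := neg_abs_le D
      have habsC : 0 ≤ |C| := abs_nonneg C
      have : (-R) * z = -(R * z) := by ring
      rw [← hD] at h1
      linarith
    · have h1 := Jfun_lb2 lam mu t u w hlam hmu ht hu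
      have hp1 : R * (1 - z) ≤ w * (1 - z) :=
        mul_le_mul_of_nonneg_right h.le (by linarith)
      have hp2 : R * m ≤ R * (1 - z) :=
        mul_le_mul_of_nonneg_left (min_le_right _ _) hR0.le
      have hCabs : -|C| ≤ C := neg_abs_le C
      have habsD : 0 ≤ |D| := abs_nonneg D
      have hexp : w * (1 - z) = w - w * z := by ring
      rw [← hC] at h1
      linarith
  have hcont : Continuous fun w => w * z - Jfun lam mu t w u :=
    (continuous_id.mul continuous_const).sub (Jfun_cont lam mu t u hlam hmu ht)
  have h0mem : (0:ℝ) ∈ Set.Icc (-R) R := by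
    constructor <;> linarith
  obtain ⟨v, hvmem, hvmax⟩ :=
    (isCompact_Icc (a := -R) (b := R)).exists_isMaxOn ⟨0, h0mem⟩ hcont.continuousOn
  refine ⟨v, fun w => ?_⟩
  by_cases hw : w ∈ Set.Icc (-R) R
  · exact hvmax hw
  · have h1 := key w hw
    have h2 := hvmax h0mem
    have h3 : (0:ℝ) * z - Jfun lam mu t 0 u = 0 := by
      rw [Jfun_zero]; ring
    simp only [Set.mem_setOf_eq] at h2
    linarith

lemma Jfun_affine (lam mu t v a b u1 u2 : ℝ) (hab : a + b = 1) :
    Jfun lam mu t v (a * u1 + b * u2) = a * Jfun lam mu t v u1 + b * Jfun lam mu t v u2 := by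
  unfold Jfun
  have hb : b = 1 - a := by linarith
  subst hb
  ring

/-- Convexity of `u ↦ I_{1,t}(u,h)` and strict convexity of `h ↦ I_{1,t}(u,h)` on `[0,1]`. -/
theorem stmt_2 (lam mu t : ℝ) (hlam : 0 < lam) (hmu : 0 < mu) (ht : 0 < t) :
    (∀ h ∈ Set.Icc (0:ℝ) 1, ConvexOn ℝ (Set.Icc (0:ℝ) 1) (fun u => I1 lam mu t u h)) ∧
    (∀ u ∈ Set.Icc (0:ℝ) 1, StrictConvexOn ℝ (Set.Icc (0:ℝ) 1) (fun x => I1 lam mu t u x)) := by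
  constructor
  · -- convexity in u
    intro h hh
    refine ⟨convex_Icc 0 1, ?_⟩
    intro u1 hu1 u2 hu2 a b ha hb hab
    simp only [smul_eq_mul]
    have hmem : a * u1 + b * u2 ∈ Set.Icc (0:ℝ) 1 :=
      (convex_Icc (0:ℝ) 1) hu1 hu2 ha hb hab
    apply ciSup_le
    intro v
    have heq : v * h - Jfun lam mu t v (a * u1 + b * u2) =
        a * (v * h - Jfun lam mu t v u1) + b * (v * h - Jfun lam mu t v u2) := by
      rw [Jfun_affine lam mu t v a b u1 u2 hab]; linear_combination (-(v * h)) * hab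
    rw [heq]
    have h1 : v * h - Jfun lam mu t v u1 ≤ I1 lam mu t u1 h :=
      le_ciSup (bddAbove_I1 lam mu t u1 h hlam hmu ht hu1 hh) v
    have h2 : v * h - Jfun lam mu t v u2 ≤ I1 lam mu t u2 h :=
      le_ciSup (bddAbove_I1 lam mu t u2 h hlam hmu ht hu2 hh) v
    have := mul_le_mul_of_nonneg_left h1 ha
    have := mul_le_mul_of_nonneg_left h2 hb
    linarith
  · -- strict convexity in x
    intro u hu
    refine ⟨convex_Icc 0 1, ?_⟩
    intro x hx y hy hxy a b ha hb hab
    simp only [smul_eq_mul]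
    set z : ℝ := a * x + b * y with hzdef
    have hzmem : z ∈ Set.Icc (0:ℝ) 1 :=
      (convex_Icc (0:ℝ) 1) hx hy ha.le hb.le hab
    have hz0 : 0 < z := by
      rcases hxy.lt_or_gt with hlt | hlt
      · nlinarith [hx.1, hy.1]
      · nlinarith [hx.1, hy.1]
    have hz1 : z < 1 := by
      rcases hxy.lt_or_gt with hlt | hlt
      · nlinarith [hx.2, hy.2]
      · nlinarith [hx.2, hy.2]
    obtain ⟨v, hvmax⟩ := exists_max lam mu t u z hlam hmu ht hu hz0 hz1
    have hIz : I1 lam mu t u z = v * z - Jfun lam mu t v u :=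
      le_antisymm (ciSup_le hvmax)
        (le_ciSup (bddAbove_I1 lam mu t u z hlam hmu ht hu hzmem) v)
    have hIx : v * x - Jfun lam mu t v u ≤ I1 lam mu t u x :=
      le_ciSup (bddAbove_I1 lam mu t u x hlam hmu ht hu hx) v
    have hIy : v * y - Jfun lam mu t v u ≤ I1 lam mu t u y :=
      le_ciSup (bddAbove_I1 lam mu t u y hlam hmu ht hu hy) v
    by_contra hcon
    push_neg at hcon
    -- equality case: both hIx and hIy must be equalities
    have hcomb : a * (v * x - Jfun lam mu t v u) + b * (v * y - Jfun lam mu t v u) =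
        v * z - Jfun lam mu t v u := by
      rw [hzdef]; linear_combination (-(Jfun lam mu t v u)) * hab
    have hax := mul_le_mul_of_nonneg_left hIx ha.le
    have hay := mul_le_mul_of_nonneg_left hIy hb.le
    have heqx : v * x - Jfun lam mu t v u = I1 lam mu t u x := by nlinarith
    have heqy : v * y - Jfun lam mu t v u = I1 lam mu t u y := by nlinarith
    -- v is a global max for g_x and g_y; derivatives vanish
    have hmaxx : IsLocalMax (fun w => w * x - Jfun lam mu t w u) v := by
      apply Filter.Eventually.of_forall
      intro w
      calc w * x - Jfun lam mu t w u ≤ I1 lam mu t u x :=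
            le_ciSup (bddAbove_I1 lam mu t u x hlam hmu ht hu hx) w
        _ = v * x - Jfun lam mu t v u := heqx.symm
    have hmaxy : IsLocalMax (fun w => w * y - Jfun lam mu t w u) v := by
      apply Filter.Eventually.of_forall
      intro w
      calc w * y - Jfun lam mu t w u ≤ I1 lam mu t u y :=
            le_ciSup (bddAbove_I1 lam mu t u y hlam hmu ht hu hy) w
        _ = v * y - Jfun lam mu t v u := heqy.symm
    have hdx := hmaxx.hasDerivAt_eq_zero (Jfun_hasDeriv lam mu t u x v hlam hmu ht)
    have hdy := hmaxy.hasDerivAt_eq_zero (Jfun_hasDeriv lam mu t u y v hlam hmu ht)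
    apply hxy
    linarith
end
end

section
/- Let d ∈ ℕ with d ≥ 1 and let H be a finite simple graph on vertex set {1,…,k} that is d-regular (every vertex has degree d), with e(H) edges. Then for every graphon f, the homomorphism density satisfies t(H,f) ≤ ( ∫_{[0,1]²} f(x,y)^d dx dy )^{e(H)/d}. -/
/-!
Integrate out the vertices one at a time. Once the coordinates in a set `s` have been
integrated, the partial integral of `∏ₑ fₑ` is at most `∏ₑ (partial integral of fₑ ^ d) ^ (1/d)`.
Integrating one more coordinate `v`, the factors of the edges away from `v` do not depend on
`x_v`, and the `d` factors of the edges at `v` are handled by Hölder's inequality with `d` equal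
exponents. In the end each edge `ij` contributes `(∫ f ^ d) ^ (1/d)`, because `(x_i, x_j)` is
distributed according to the product measure.
-/

noncomputable section

open MeasureTheory Real Filter

/-- A graphon: a measurable symmetric function with values in `[0,1]`. -/
def IsGraphon (f : ℝ → ℝ → ℝ) : Prop :=
  Measurable (Function.uncurry f) ∧ (∀ x y, f x y ∈ Set.Icc (0:ℝ) 1) ∧ ∀ x y, f x y = f y x

/-- The unit square `[0,1]²`. -/
def unitSq : Set (ℝ × ℝ) := Set.Icc (0:ℝ) 1 ×ˢ Set.Icc (0:ℝ) 1

/-- The set of (ordered representatives of) edges of `H`: pairs `(i,j)` with `i < j` adjacent. -/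
def edgePairs {k : ℕ} (H : SimpleGraph (Fin k)) [DecidableRel H.Adj] :
    Finset (Fin k × Fin k) :=
  Finset.univ.filter (fun p : Fin k × Fin k => p.1 < p.2 ∧ H.Adj p.1 p.2)

/-- The homomorphism density `t(H,f)` of a finite simple graph `H` in a graphon `f`. -/
def homDen {k : ℕ} (H : SimpleGraph (Fin k)) [DecidableRel H.Adj] (f : ℝ → ℝ → ℝ) : ℝ :=
  ∫ x in Set.univ.pi (fun _ : Fin k => Set.Icc (0:ℝ) 1),
    ∏ p ∈ edgePairs H, f (x p.1) (x p.2)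

open Finset Function
open scoped ENNReal

section FinnerInequality

variable {ι : Type*} {X : ι → Type*} [∀ i, MeasurableSpace (X i)] {μ : ∀ i, Measure (X i)}

theorem measurePreserving_eval_pair [Fintype ι] [∀ i, IsProbabilityMeasure (μ i)] {i j : ι}
    (hij : i ≠ j) :
    MeasurePreserving (fun x : ∀ i, X i => (x i, x j)) (Measure.pi μ) ((μ i).prod (μ j)) := by
  refine ⟨by fun_prop, ?_⟩
  have hind : ProbabilityTheory.IndepFun (fun x : ∀ i, X i => x i) (fun x => x j) (Measure.pi μ) :=
    (ProbabilityTheory.iIndepFun_pi (X := fun _ => id) fun _ => aemeasurable_id).indepFun hij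
  rw [ProbabilityTheory.indepFun_iff_map_prod_eq_prod_map_map
    (measurable_pi_apply i).aemeasurable (measurable_pi_apply j).aemeasurable] at hind
  rw [hind, (measurePreserving_eval μ i).map_eq, (measurePreserving_eval μ j).map_eq]

variable [DecidableEq ι]

theorem lmarginal_update_of_notMem_of_dependsOn [∀ i, SigmaFinite (μ i)] {s : Finset ι}
    {S : Set ι} {g : (∀ i, X i) → ℝ≥0∞} (hg : Measurable g) (hgS : DependsOn g S) {i : ι}
    (his : i ∉ s) (hiS : i ∉ S) (x : ∀ i, X i) (a : X i) :
    (∫⋯∫⁻_s, g ∂μ) (update x i a) = (∫⋯∫⁻_s, g ∂μ) x := by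
  rw [lmarginal_update_of_notMem hg his]
  congr 1
  funext y
  exact hgS fun j hj => update_of_ne (ne_of_mem_of_not_mem hj hiS) _ _

theorem lmarginal_insert_of_notMem_of_dependsOn [∀ i, SigmaFinite (μ i)] {s : Finset ι}
    {S : Set ι} {g : (∀ i, X i) → ℝ≥0∞} (hg : Measurable g) (hgS : DependsOn g S) {i : ι}
    [IsProbabilityMeasure (μ i)] (his : i ∉ s) (hiS : i ∉ S) :
    ∫⋯∫⁻_insert i s, g ∂μ = ∫⋯∫⁻_s, g ∂μ := by
  ext x
  simp_rw [lmarginal_insert _ hg his, lmarginal_update_of_notMem_of_dependsOn hg hgS his hiS,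
    lintegral_const, measure_univ, mul_one]

variable [∀ i, IsProbabilityMeasure (μ i)] {κ : Type*} {E : Finset κ} {S : κ → Finset ι}
  {d : ℕ} {f : κ → (∀ i, X i) → ℝ≥0∞}

theorem lmarginal_prod_le_prod_lmarginal_pow (hd : d ≠ 0) (hE : ∀ i, #{e ∈ E | i ∈ S e} = d)
    (hf : ∀ e ∈ E, Measurable (f e)) (hfS : ∀ e ∈ E, DependsOn (f e) (S e)) (s : Finset ι) :
    ∫⋯∫⁻_s, (fun x => ∏ e ∈ E, f e x) ∂μ ≤
      fun x => ∏ e ∈ E, (∫⋯∫⁻_s, (f e · ^ d) ∂μ) x ^ (d⁻¹ : ℝ) := by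
  have hfd (e) (he : e ∈ E) : Measurable (f e · ^ d) := (hf e he).pow_const d
  induction s using Finset.induction_on with
  | empty =>
    intro x
    simp only [lmarginal_empty, ENNReal.pow_rpow_inv_natCast hd, le_refl]
  | @insert v s hvs ih =>
    intro x
    set g : κ → X v → ℝ≥0∞ := fun e a => (∫⋯∫⁻_s, (f e · ^ d) ∂μ) (update x v a)
    have hg (e) (he : e ∈ E) : Measurable (g e) :=
      ((hfd e he).lmarginal μ).comp (measurable_update x)
    have hconst (e) (he : e ∈ {e ∈ E | v ∉ S e}) (a : X v) :
        g e a = (∫⋯∫⁻_insert v s, (f e · ^ d) ∂μ) x := by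
      rw [mem_filter] at he
      have hS : DependsOn (f e · ^ d) (S e) := fun x y hxy => by simp only [hfS e he.1 hxy]
      rw [lmarginal_insert_of_notMem_of_dependsOn (hfd e he.1) hS hvs he.2]
      exact lmarginal_update_of_notMem_of_dependsOn (hfd e he.1) hS hvs he.2 x a
    calc (∫⋯∫⁻_insert v s, (fun x => ∏ e ∈ E, f e x) ∂μ) x
        = ∫⁻ a, (∫⋯∫⁻_s, (fun x => ∏ e ∈ E, f e x) ∂μ) (update x v a) ∂μ v :=
          lmarginal_insert _ (Finset.measurable_prod _ hf) hvs x
      _ ≤ ∫⁻ a, ∏ e ∈ E, g e a ^ (d⁻¹ : ℝ) ∂μ v := lintegral_mono fun a => ih _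
      _ = (∫⁻ a, ∏ e ∈ E with v ∈ S e, g e a ^ (d⁻¹ : ℝ) ∂μ v) *
            ∏ e ∈ E with v ∉ S e, (∫⋯∫⁻_insert v s, (f e · ^ d) ∂μ) x ^ (d⁻¹ : ℝ) := by
          rw [← lintegral_mul_const _ (Finset.measurable_prod _ fun e he =>
            (hg e (mem_filter.1 he).1).pow_const _)]
          refine lintegral_congr fun a => ?_
          rw [← prod_filter_mul_prod_filter_not E (fun e => v ∈ S e)]
          congr 1
          exact prod_congr rfl fun e he => by rw [hconst e he a]
      _ ≤ (∏ e ∈ E with v ∈ S e, (∫⁻ a, g e a ∂μ v) ^ (d⁻¹ : ℝ)) *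
            ∏ e ∈ E with v ∉ S e, (∫⋯∫⁻_insert v s, (f e · ^ d) ∂μ) x ^ (d⁻¹ : ℝ) := by
          gcongr
          refine ENNReal.lintegral_prod_norm_pow_le _
            (fun e he => (hg e (mem_filter.1 he).1).aemeasurable) ?_ fun _ _ => by positivity
          rw [sum_const, hE, nsmul_eq_mul, mul_inv_cancel₀ (Nat.cast_ne_zero.2 hd)]
      _ = ∏ e ∈ E, (∫⋯∫⁻_insert v s, (f e · ^ d) ∂μ) x ^ (d⁻¹ : ℝ) := by
          rw [← prod_filter_mul_prod_filter_not E (fun e => v ∈ S e)]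
          congr 1
          exact prod_congr rfl fun e he =>
            by rw [lmarginal_insert _ (hfd e (mem_filter.1 he).1) hvs]

theorem lintegral_prod_le_prod_lintegral_pow [Fintype ι] (hd : d ≠ 0)
    (hE : ∀ i, #{e ∈ E | i ∈ S e} = d)
    (hf : ∀ e ∈ E, Measurable (f e)) (hfS : ∀ e ∈ E, DependsOn (f e) (S e)) :
    ∫⁻ x, ∏ e ∈ E, f e x ∂Measure.pi μ ≤
      ∏ e ∈ E, (∫⁻ x, f e x ^ d ∂Measure.pi μ) ^ (d⁻¹ : ℝ) := by
  rcases isEmpty_or_nonempty (∀ i, X i) with hX | ⟨⟨x⟩⟩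
  · simp [lintegral_of_isEmpty]
  simpa using lmarginal_prod_le_prod_lmarginal_pow (μ := μ) hd hE hf hfS univ x

end FinnerInequality

theorem card_edgePairs_incident {k : ℕ} (H : SimpleGraph (Fin k)) [DecidableRel H.Adj]
    (v : Fin k) : #{p ∈ edgePairs H | v ∈ ({p.1, p.2} : Finset (Fin k))} = H.degree v := by
  rw [← SimpleGraph.card_neighborFinset_eq_degree]
  refine card_nbij' (fun p => if p.1 = v then p.2 else p.1)
    (fun u => if v < u then (v, u) else (u, v)) ?_ ?_ ?_ ?_
  all_goals
    intro p hp
    simp only [edgePairs, coe_filter, mem_filter, mem_univ, true_and, Set.mem_ofPred_eq,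
      mem_insert, mem_singleton, SimpleGraph.coe_neighborFinset, SimpleGraph.mem_neighborSet]
      at hp ⊢
    grind [SimpleGraph.Adj.symm, SimpleGraph.Adj.ne]

theorem Measurable.comp_eval_eval {ι β γ : Type*} [MeasurableSpace β] [MeasurableSpace γ]
    {G : β → β → γ} (hG : Measurable (uncurry G)) (i j : ι) :
    Measurable fun x : ι → β => G (x i) (x j) :=
  hG.comp (f := fun x : ι → β => (x i, x j)) (by fun_prop)

theorem lintegral_prod_edgePairs_le {α : Type*} [MeasurableSpace α] {ν : Measure α}
    [IsProbabilityMeasure ν] {d k : ℕ} (hd : d ≠ 0) (H : SimpleGraph (Fin k))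
    [DecidableRel H.Adj] (hreg : ∀ v, H.degree v = d) {F : α → α → ℝ≥0∞}
    (hF : Measurable (uncurry F)) :
    ∫⁻ x, ∏ p ∈ edgePairs H, F (x p.1) (x p.2) ∂Measure.pi (fun _ => ν) ≤
      (∫⁻ z, F z.1 z.2 ^ d ∂ν.prod ν) ^ ((#(edgePairs H) : ℝ) / d) := by
  have hfactor (p) (hp : p ∈ edgePairs H) :
      ∫⁻ x, F (x p.1) (x p.2) ^ d ∂Measure.pi (fun _ => ν) = ∫⁻ z, F z.1 z.2 ^ d ∂ν.prod ν :=
    (measurePreserving_eval_pair (μ := fun _ => ν) (mem_filter.1 hp).2.1.ne).lintegral_comp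
      (f := fun z : α × α => F z.1 z.2 ^ d) (hF.pow_const d)
  calc ∫⁻ x, ∏ p ∈ edgePairs H, F (x p.1) (x p.2) ∂Measure.pi (fun _ => ν)
      ≤ ∏ p ∈ edgePairs H, (∫⁻ x, F (x p.1) (x p.2) ^ d ∂Measure.pi (fun _ => ν)) ^ (d⁻¹ : ℝ) :=
        lintegral_prod_le_prod_lintegral_pow (S := fun p => {p.1, p.2}) hd
          (fun v => by rw [card_edgePairs_incident, hreg]) (fun p _ => hF.comp_eval_eval p.1 p.2)
          fun p _ x y hxy => by simp only [hxy p.1 (by simp), hxy p.2 (by simp)]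
    _ = (∫⁻ z, F z.1 z.2 ^ d ∂ν.prod ν) ^ ((#(edgePairs H) : ℝ) / d) := by
        rw [prod_congr rfl fun p hp => by rw [hfactor p hp], prod_const, ← ENNReal.rpow_natCast,
          ← ENNReal.rpow_mul, div_eq_inv_mul]

instance : IsProbabilityMeasure (volume.restrict (Set.Icc (0:ℝ) 1)) :=
  ⟨by simp⟩

theorem homDen_eq_toReal_lintegral {k : ℕ} (H : SimpleGraph (Fin k)) [DecidableRel H.Adj]
    {f : ℝ → ℝ → ℝ} (hf : Measurable (uncurry f)) (hf₀ : ∀ x y, 0 ≤ f x y) :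
    homDen H f = (∫⁻ x, ∏ p ∈ edgePairs H, ENNReal.ofReal (f (x p.1) (x p.2))
      ∂Measure.pi fun _ => volume.restrict (Set.Icc (0:ℝ) 1)).toReal := by
  rw [homDen, volume_pi, Measure.restrict_pi_pi, integral_eq_lintegral_of_nonneg_ae
    (.of_forall fun x => prod_nonneg fun p _ => hf₀ _ _)
    (Finset.measurable_prod _ fun p _ => hf.comp_eval_eval p.1 p.2).aestronglyMeasurable]
  simp_rw [ENNReal.ofReal_prod_of_nonneg fun p _ => hf₀ _ _]

theorem setIntegral_unitSq_eq_toReal_lintegral {f : ℝ → ℝ → ℝ} (hf : Measurable (uncurry f))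
    (hf₀ : ∀ x y, 0 ≤ f x y) (d : ℕ) :
    ∫ p in unitSq, f p.1 p.2 ^ d = (∫⁻ z, ENNReal.ofReal (f z.1 z.2) ^ d
      ∂(volume.restrict (Set.Icc (0:ℝ) 1)).prod (volume.restrict (Set.Icc (0:ℝ) 1))).toReal := by
  rw [unitSq, Measure.volume_eq_prod, ← Measure.prod_restrict, integral_eq_lintegral_of_nonneg_ae
    (.of_forall fun z => pow_nonneg (hf₀ _ _) d) (by fun_prop)]
  simp_rw [ENNReal.ofReal_pow (hf₀ _ _)]

/-- Generalized Hölder inequality: for a `d`-regular graph `H`,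
`t(H,f) ≤ (∫ f^d)^{e(H)/d}`. -/
theorem stmt_13 (d k : ℕ) (hd : 1 ≤ d) (H : SimpleGraph (Fin k)) [DecidableRel H.Adj]
    (hreg : ∀ v : Fin k, H.degree v = d)
    (f : ℝ → ℝ → ℝ) (hf : IsGraphon f) :
    homDen H f ≤ (∫ p in unitSq, (f p.1 p.2) ^ d) ^ (((edgePairs H).card : ℝ) / d) := by
  obtain ⟨hmeas, hrange, -⟩ := hf
  have hf₀ (x y : ℝ) : 0 ≤ f x y := (hrange x y).1
  have hfin : ∫⁻ z, ENNReal.ofReal (f z.1 z.2) ^ d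
      ∂(volume.restrict (Set.Icc (0:ℝ) 1)).prod (volume.restrict (Set.Icc (0:ℝ) 1)) ≠ ⊤ :=
    ne_top_of_le_ne_top (by simp : ∫⁻ _, (1 : ℝ≥0∞) ∂_ ≠ ⊤) <|
      lintegral_mono fun z => pow_le_one' (ENNReal.ofReal_le_one.2 (hrange _ _).2) d
  rw [homDen_eq_toReal_lintegral H hmeas hf₀, setIntegral_unitSq_eq_toReal_lintegral hmeas hf₀,
    ENNReal.toReal_rpow]
  exact ENNReal.toReal_mono (ENNReal.rpow_ne_top_of_nonneg (by positivity) hfin)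
    (lintegral_prod_edgePairs_le (by omega) H hreg (F := fun x y => ENNReal.ofReal (f x y))
      (ENNReal.measurable_ofReal.comp hmeas))
end
end

section
/- Let λ, μ ∈ (0,∞), d ∈ ℕ with d ≥ 2, and let u, r ∈ [0,1] with u < r < 1. Then there exists T₀ > 0 such that for every T ∈ (0,T₀), the point (r^d, I_{1,T}(u,r)) does not lie on the convex minorant of the map x ↦ I_{1,T}(u, x^{1/d}) on [0,1]; that is, writing ψ_T(x) = I_{1,T}(u, x^{1/d}) and ψ̂_T for its convex minorant, one has ψ̂_T(r^d) < ψ_T(r^d) for all T ∈ (0,T₀). -/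
noncomputable section

open MeasureTheory Real Filter

/-- `φ` is the convex minorant of `ψ` on `[0,1]`: the largest convex function on `[0,1]`
bounded above by `ψ`. -/
def IsConvexMinorant (ψ φ : ℝ → ℝ) : Prop :=
  ConvexOn ℝ (Set.Icc (0:ℝ) 1) φ ∧ (∀ x ∈ Set.Icc (0:ℝ) 1, φ x ≤ ψ x) ∧
  ∀ φ' : ℝ → ℝ, ConvexOn ℝ (Set.Icc (0:ℝ) 1) φ' → (∀ x ∈ Set.Icc (0:ℝ) 1, φ' x ≤ ψ x) →
    ∀ x ∈ Set.Icc (0:ℝ) 1, φ' x ≤ φ x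

variable {lam mu T : ℝ}

lemma p01_pos (hlam : 0 < lam) (hmu : 0 < mu) (hT : 0 < T) : 0 < p01 lam mu T := by
  have h1 : Real.exp (-(T * (lam + mu))) < 1 := by
    rw [Real.exp_lt_one_iff]; nlinarith
  have : 0 < lam + mu := by linarith
  apply div_pos ?_ this
  nlinarith

lemma p01_le (hlam : 0 < lam) (hmu : 0 < mu) (hT : 0 < T) : p01 lam mu T ≤ lam * T := by
  have h1 : 1 - (T * (lam + mu)) ≤ Real.exp (-(T * (lam + mu))) := by
    have := Real.add_one_le_exp (-(T * (lam + mu))); linarith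
  have h2 : 0 < lam + mu := by linarith
  rw [p01, div_le_iff₀ h2]
  nlinarith

lemma p01_ge (hlam : 0 < lam) (hmu : 0 < mu) (hT : 0 < T) (hx : T * (lam + mu) ≤ 1) :
    lam * T / 3 ≤ p01 lam mu T := by
  set x := T * (lam + mu) with hxdef
  have hx0 : 0 < x := by positivity
  have h2 : 0 < lam + mu := by linarith
  -- 1 - exp(-x) ≥ x * exp(-x) ≥ x/3
  have he1 : x * Real.exp (-x) ≤ 1 - Real.exp (-x) := by
    have := Real.add_one_le_exp x
    have h3 := Real.exp_pos (-x)
    have hmul : (x + 1) * Real.exp (-x) ≤ Real.exp x * Real.exp (-x) :=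
      mul_le_mul_of_nonneg_right this h3.le
    rw [← Real.exp_add] at hmul
    simp at hmul
    nlinarith
  have he2 : (1:ℝ)/3 ≤ Real.exp (-x) := by
    have : Real.exp (-x) ≥ Real.exp (-1) := Real.exp_le_exp.2 (by linarith)
    have h3 : Real.exp 1 < 3 := lt_trans Real.exp_one_lt_d9 (by norm_num)
    have h4 : Real.exp (-1) = (Real.exp 1)⁻¹ := Real.exp_neg 1
    have h5 : (0:ℝ) < Real.exp 1 := Real.exp_pos 1
    rw [h4] at this
    have : (1:ℝ)/3 ≤ (Real.exp 1)⁻¹ := by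
      rw [div_le_iff₀ (by norm_num), inv_mul_eq_div, le_div_iff₀ h5]
      nlinarith
    linarith [Real.exp_le_exp.2 (show -x ≤ -x from le_refl _), (Real.exp_le_exp.2 (show (-1:ℝ) ≤ -x by linarith) : Real.exp (-1) ≤ Real.exp (-x)), this, h4 ▸ (Real.exp_le_exp.2 (show (-1:ℝ) ≤ -x by linarith))]
  have key : x / 3 ≤ 1 - Real.exp (-x) := by nlinarith
  rw [p01, le_div_iff₀ h2]
  have : lam - lam * Real.exp (-x) = lam * (1 - Real.exp (-x)) := by ring
  rw [this]
  calc lam * T / 3 * (lam + mu) = lam * (x/3) := by rw [hxdef]; ring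
    _ ≤ lam * (1 - Real.exp (-x)) := by nlinarith

lemma p01_lt_one (hlam : 0 < lam) (hmu : 0 < mu) (hT : 0 < T) : p01 lam mu T < 1 := by
  have h2 : 0 < lam + mu := by linarith
  rw [p01, div_lt_one h2]
  have := Real.exp_pos (-(T * (lam + mu)))
  nlinarith

lemma p11_ge (hlam : 0 < lam) (hmu : 0 < mu) : lam / (lam + mu) ≤ p11 lam mu T := by
  have h2 : 0 < lam + mu := by linarith
  rw [p11, div_le_div_iff₀ h2 h2]
  have h3 := Real.exp_pos (-(T * (lam + mu)))
  nlinarith [mul_pos (mul_pos hmu h3) h2]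

lemma p11_pos (hlam : 0 < lam) (hmu : 0 < mu) : 0 < p11 lam mu T := by
  have h2 : 0 < lam + mu := by linarith
  apply div_pos ?_ h2
  have := Real.exp_pos (-(T * (lam + mu)))
  nlinarith

lemma p11_lt_one (hlam : 0 < lam) (hmu : 0 < mu) (hT : 0 < T) : p11 lam mu T < 1 := by
  have h2 : 0 < lam + mu := by linarith
  rw [p11, div_lt_one h2]
  have h1 : Real.exp (-(T * (lam + mu))) < 1 := by
    rw [Real.exp_lt_one_iff]; nlinarith
  nlinarith

-- generic log lemmas
lemma aux_pos {q v : ℝ} (hq0 : 0 < q) (hq1 : q ≤ 1) : 0 < 1 - q + Real.exp v * q := by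
  have h := Real.exp_pos v
  nlinarith

lemma aux_qv_le {q v : ℝ} (hq0 : 0 ≤ q) (hq1 : q ≤ 1) :
    q * v ≤ Real.log (1 - q + Real.exp v * q) := by
  have hexp : Real.exp (q * v) ≤ 1 - q + Real.exp v * q := by
    have h := convexOn_exp.2 (Set.mem_univ v) (Set.mem_univ (0:ℝ)) hq0
      (show (0:ℝ) ≤ 1 - q by linarith) (by ring)
    simp only [smul_eq_mul, mul_zero, add_zero, Real.exp_zero, mul_one] at h
    linarith
  calc q * v = Real.log (Real.exp (q * v)) := (Real.log_exp _).symm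
    _ ≤ _ := Real.log_le_log (Real.exp_pos _) hexp

lemma aux_vlog_le {q v : ℝ} (hq0 : 0 < q) (hq1 : q ≤ 1) :
    v + Real.log q ≤ Real.log (1 - q + Real.exp v * q) := by
  have h1 : Real.exp v * q ≤ 1 - q + Real.exp v * q := by linarith
  have h2 := Real.log_le_log (mul_pos (Real.exp_pos v) hq0) h1
  rwa [Real.log_mul (Real.exp_ne_zero v) (ne_of_gt hq0), Real.log_exp] at h2

lemma aux_le_v {q v : ℝ} (hq0 : 0 < q) (hq1 : q ≤ 1) (hv : 0 ≤ v) :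
    Real.log (1 - q + Real.exp v * q) ≤ v := by
  have h1 : 1 - q + Real.exp v * q ≤ Real.exp v := by
    have := Real.one_le_exp hv
    nlinarith
  have := Real.log_le_log (aux_pos hq0 hq1) h1
  rwa [Real.log_exp] at this

lemma aux_nonneg {q v : ℝ} (hq0 : 0 < q) (hq1 : q ≤ 1) (hv : 0 ≤ v) :
    0 ≤ Real.log (1 - q + Real.exp v * q) := by
  apply Real.log_nonneg
  have := Real.one_le_exp hv
  nlinarith

/-- pointwise upper bound on `v y - J` -/
lemma pointwise_upper (hlam : 0 < lam) (hmu : 0 < mu) (hT : 0 < T)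
    {u y : ℝ} (hu : 0 ≤ u) (hy : u + p01 lam mu T ≤ y) (hy1 : y ≤ 1) (v : ℝ) :
    v * y - Jfun lam mu T v u ≤ (y - u) * (-Real.log (p01 lam mu T)) +
      u * (-Real.log (p11 lam mu T)) := by
  set p := p01 lam mu T with hp
  set q := p11 lam mu T with hq
  have hp0 : 0 < p := p01_pos hlam hmu hT
  have hp1 : p < 1 := p01_lt_one hlam hmu hT
  have hq0 : 0 < q := p11_pos hlam hmu
  have hq1 : q < 1 := p11_lt_one hlam hmu hT
  have hu1 : u < 1 := by linarith
  have hyu : 0 < y - u := by linarith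
  have hlogp : Real.log p < 0 := Real.log_neg hp0 hp1
  have hlogq : Real.log q < 0 := Real.log_neg hq0 hq1
  rw [Jfun, ← hp, ← hq]
  rcases le_total v 0 with hv | hv
  · -- v ≤ 0 : use q*v, p*v lower bounds
    have h1 := aux_qv_le (q := q) (v := v) hq0.le hq1.le
    have h2 := aux_qv_le (q := p) (v := v) hp0.le hp1.le
    have hJ : u * (q * v) + (1 - u) * (p * v) ≤
        u * Real.log (1 - q + Real.exp v * q) + (1 - u) * Real.log (1 - p + Real.exp v * p) := by
      have := mul_le_mul_of_nonneg_left h1 hu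
      have := mul_le_mul_of_nonneg_left h2 (by linarith : (0:ℝ) ≤ 1 - u)
      linarith
    have hcoef : 0 ≤ y - u * q - (1 - u) * p := by nlinarith
    have hvy : v * y - (u * (q * v) + (1 - u) * (p * v)) ≤ 0 := by nlinarith
    nlinarith [mul_nonneg hyu.le (neg_nonneg.2 hlogp.le), mul_nonneg hu (neg_nonneg.2 hlogq.le)]
  · rcases le_total v (-Real.log p) with hvp | hvp
    · -- 0 ≤ v ≤ -log p
      have h1 := aux_vlog_le (q := q) (v := v) hq0 hq1.le
      have h2 := aux_nonneg (q := p) (v := v) hp0 hp1.le hv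
      have hJ : u * (v + Real.log q) ≤
          u * Real.log (1 - q + Real.exp v * q) + (1 - u) * Real.log (1 - p + Real.exp v * p) := by
        have := mul_le_mul_of_nonneg_left h1 hu
        have := mul_le_mul_of_nonneg_left h2 (by linarith : (0:ℝ) ≤ 1 - u)
        linarith
      have key : v * (y - u) ≤ (-Real.log p) * (y - u) :=
        mul_le_mul_of_nonneg_right hvp hyu.le
      nlinarith [mul_nonneg hu (neg_nonneg.2 hlogq.le)]
    · -- v ≥ -log p
      have h1 := aux_vlog_le (q := q) (v := v) hq0 hq1.le
      have h2 := aux_vlog_le (q := p) (v := v) hp0 hp1.le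
      have hJ : u * (v + Real.log q) + (1 - u) * (v + Real.log p) ≤
          u * Real.log (1 - q + Real.exp v * q) + (1 - u) * Real.log (1 - p + Real.exp v * p) := by
        have := mul_le_mul_of_nonneg_left h1 hu
        have := mul_le_mul_of_nonneg_left h2 (by linarith : (0:ℝ) ≤ 1 - u)
        linarith
      have key : v * (y - 1) ≤ (-Real.log p) * (y - 1) := by
        apply mul_le_mul_of_nonpos_right hvp (by linarith)
      nlinarith

lemma I1_upper (hlam : 0 < lam) (hmu : 0 < mu) (hT : 0 < T)
    {u y : ℝ} (hu : 0 ≤ u) (hy : u + p01 lam mu T ≤ y) (hy1 : y ≤ 1) :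
    I1 lam mu T u y ≤ (y - u) * (-Real.log (p01 lam mu T)) +
      u * (-Real.log (p11 lam mu T)) :=
  ciSup_le (pointwise_upper hlam hmu hT hu hy hy1)

lemma I1_bdd (hlam : 0 < lam) (hmu : 0 < mu) (hT : 0 < T)
    {u y : ℝ} (hu : 0 ≤ u) (hy : u + p01 lam mu T ≤ y) (hy1 : y ≤ 1) :
    BddAbove (Set.range fun v : ℝ => v * y - Jfun lam mu T v u) := by
  refine ⟨(y - u) * (-Real.log (p01 lam mu T)) + u * (-Real.log (p11 lam mu T)), ?_⟩
  rintro z ⟨v, rfl⟩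
  exact pointwise_upper hlam hmu hT hu hy hy1 v

lemma I1_lower (hlam : 0 < lam) (hmu : 0 < mu) (hT : 0 < T) (hT1 : T < 1)
    {u y : ℝ} (hu : 0 ≤ u) (hy : u + p01 lam mu T ≤ y) (hy1 : y ≤ 1) :
    (y - u) * (-Real.log T) - (1 - u) * Real.log (1 + lam) ≤ I1 lam mu T u y := by
  set p := p01 lam mu T with hp
  set q := p11 lam mu T with hq
  have hp0 : 0 < p := p01_pos hlam hmu hT
  have hp1 : p < 1 := p01_lt_one hlam hmu hT
  have hq0 : 0 < q := p11_pos hlam hmu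
  have hq1 : q < 1 := p11_lt_one hlam hmu hT
  have hu1 : u < 1 := by linarith
  set L := -Real.log T with hL
  have hL0 : 0 < L := by
    rw [hL, neg_pos]; exact Real.log_neg hT hT1
  have hexpL : Real.exp L = T⁻¹ := by
    rw [hL, Real.exp_neg, Real.exp_log hT]
  have hJle : Jfun lam mu T L u ≤ u * L + (1 - u) * Real.log (1 + lam) := by
    rw [Jfun, ← hp, ← hq]
    have h1 : Real.log (1 - q + Real.exp L * q) ≤ L := aux_le_v hq0 hq1.le hL0.le
    have h2 : Real.log (1 - p + Real.exp L * p) ≤ Real.log (1 + lam) := by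
      apply Real.log_le_log (aux_pos hp0 hp1.le)
      have hple : p ≤ lam * T := p01_le hlam hmu hT
      have : Real.exp L * p ≤ lam := by
        rw [hexpL]
        rw [inv_mul_le_iff₀ hT] at *
        · nlinarith
      nlinarith
    have := mul_le_mul_of_nonneg_left h1 hu
    have := mul_le_mul_of_nonneg_left h2 (by linarith : (0:ℝ) ≤ 1 - u)
    linarith
  have hle : (y - u) * L - (1 - u) * Real.log (1 + lam) ≤ L * y - Jfun lam mu T L u := by
    nlinarith
  exact hle.trans (le_ciSup (I1_bdd hlam hmu hT hu hy hy1) L)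


/-- Short-time symmetry breaking: for `u < r` and `T` sufficiently small, the point
`(r^d, I_{1,T}(u,r))` does not lie on the convex minorant of `x ↦ I_{1,T}(u,x^{1/d})`. -/
theorem stmt_17 (lam mu : ℝ) (hlam : 0 < lam) (hmu : 0 < mu)
    (d : ℕ) (hd : 2 ≤ d) (u r : ℝ) (hu : 0 ≤ u) (hur : u < r) (hr1 : r < 1) :
    ∃ T0 > (0:ℝ), ∀ T : ℝ, 0 < T → T < T0 →
      ∀ psihat : ℝ → ℝ,
        IsConvexMinorant (fun x => I1 lam mu T u (x ^ (1 / (d:ℝ)))) psihat →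
        psihat (r ^ d) < I1 lam mu T u ((r ^ d) ^ (1 / (d:ℝ))) := by
  have hd0 : d ≠ 0 := by omega
  set y₁ := (u + r) / 2 with hy₁def
  set y₂ := (r + 1) / 2 with hy₂def
  have hy₁0 : 0 ≤ y₁ := by rw [hy₁def]; linarith
  have huy₁ : u < y₁ := by rw [hy₁def]; linarith
  have hy₁r : y₁ < r := by rw [hy₁def]; linarith
  have hry₂ : r < y₂ := by rw [hy₂def]; linarith
  have hy₂1 : y₂ < 1 := by rw [hy₂def]; linarith
  have hy₂0 : 0 ≤ y₂ := by linarith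
  have hr0 : 0 ≤ r := by linarith
  set a := y₁ ^ d with hadef
  set b := y₂ ^ d with hbdef
  have hab : a < b := pow_lt_pow_left₀ (by linarith) hy₁0 hd0
  have hard : a < r ^ d := pow_lt_pow_left₀ hy₁r hy₁0 hd0
  have hrdb : r ^ d < b := pow_lt_pow_left₀ hry₂ hr0 hd0
  set θ := (b - r ^ d) / (b - a) with hθdef
  have hba : 0 < b - a := by linarith
  have hθ0 : 0 < θ := div_pos (by linarith) hba
  have hθ1 : θ < 1 := by
    rw [hθdef, div_lt_one hba]; linarith
  have h1θ : 0 ≤ 1 - θ := by linarith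
  have hcomb : θ * a + (1 - θ) * b = r ^ d := by
    rw [hθdef]; field_simp; ring
  set s := θ * y₁ + (1 - θ) * y₂ with hsdef
  have hs0 : 0 ≤ s := by
    have := mul_nonneg hθ0.le hy₁0
    have := mul_nonneg h1θ hy₂0
    linarith
  have hspow : s ^ d < r ^ d := by
    have hsc := (strictConvexOn_pow hd).2 (Set.mem_Ici.2 hy₁0) (Set.mem_Ici.2 hy₂0)
      (by intro h; rw [h] at hy₁r; linarith : y₁ ≠ y₂) hθ0 (by linarith : (0:ℝ) < 1 - θ)
      (by ring)
    simp only [smul_eq_mul] at hsc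
    calc s ^ d = (θ * y₁ + (1 - θ) * y₂) ^ d := by rw [hsdef]
      _ < θ * y₁ ^ d + (1 - θ) * y₂ ^ d := hsc
      _ = r ^ d := hcomb
  have hsr : s < r := by
    by_contra h
    push_neg at h
    exact absurd (pow_le_pow_left₀ hr0 h d) (by linarith)
  have hus : u < s := by nlinarith [mul_nonneg h1θ (by linarith : (0:ℝ) ≤ y₂ - y₁)]
  set δ := r - s with hδdef
  have hδ0 : 0 < δ := by rw [hδdef]; linarith
  set c2 := Real.log 3 - Real.log lam with hc2def
  set K1 := Real.log (lam + mu) - Real.log lam with hK1def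
  set C1 := (1 - u) * Real.log (1 + lam) with hC1def
  set M := (s - u) * c2 + u * K1 + C1 with hMdef
  refine ⟨min (min 1 ((lam + mu)⁻¹)) (min ((y₁ - u) / lam) (Real.exp (-(max M 0 + 1) / δ))),
    ?_, ?_⟩
  · have h2 : 0 < lam + mu := by linarith
    exact lt_min (lt_min one_pos (inv_pos.2 h2))
      (lt_min (div_pos (by linarith) hlam) (Real.exp_pos _))
  intro T hT hTlt psihat hmin
  have hT1 : T < 1 := lt_of_lt_of_le hTlt ((min_le_left _ _).trans (min_le_left _ _))
  have hTsum : T * (lam + mu) ≤ 1 := by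
    have h1 : T < (lam + mu)⁻¹ := lt_of_lt_of_le hTlt ((min_le_left _ _).trans (min_le_right _ _))
    have h2 : 0 < lam + mu := by linarith
    have h3 := mul_lt_mul_of_pos_right h1 h2
    rw [inv_mul_cancel₀ (ne_of_gt h2)] at h3
    linarith
  have hTp : lam * T < y₁ - u := by
    have h1 : T < (y₁ - u) / lam := lt_of_lt_of_le hTlt ((min_le_right _ _).trans (min_le_left _ _))
    rw [lt_div_iff₀ hlam] at h1; linarith
  have hTexp : T ≤ Real.exp (-(max M 0 + 1) / δ) :=
    le_of_lt (lt_of_lt_of_le hTlt ((min_le_right _ _).trans (min_le_right _ _)))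
  set L := -Real.log T with hLdef
  have hL0 : 0 < L := by rw [hLdef, neg_pos]; exact Real.log_neg hT hT1
  have hLM : max M 0 + 1 ≤ δ * L := by
    have h1 : Real.log T ≤ -(max M 0 + 1) / δ := by
      calc Real.log T ≤ Real.log (Real.exp (-(max M 0 + 1) / δ)) :=
            Real.log_le_log hT hTexp
        _ = -(max M 0 + 1) / δ := Real.log_exp _
    have h2 : (max M 0 + 1) / δ ≤ L := by
      rw [neg_div] at h1; rw [hLdef]; linarith
    have h3 := (div_le_iff₀ hδ0).1 h2
    linarith [mul_comm L δ]
  -- p, q bounds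
  set p := p01 lam mu T with hpdef
  set q := p11 lam mu T with hqdef
  have hp0 : 0 < p := p01_pos hlam hmu hT
  have hple : p ≤ lam * T := p01_le hlam hmu hT
  have hpge : lam * T / 3 ≤ p := p01_ge hlam hmu hT hTsum
  have hq0 : 0 < q := p11_pos hlam hmu
  have hqge : lam / (lam + mu) ≤ q := p11_ge hlam hmu
  have hup₁ : u + p ≤ y₁ := by linarith
  have hup₂ : u + p ≤ y₂ := by linarith
  have hupr : u + p ≤ r := by linarith
  have hLp : -Real.log p ≤ L + c2 := by
    have h1 : Real.log (lam * T / 3) ≤ Real.log p :=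
      Real.log_le_log (by positivity) hpge
    have h2 : Real.log (lam * T / 3) = Real.log lam + Real.log T - Real.log 3 := by
      rw [Real.log_div (by positivity) (by norm_num), Real.log_mul (ne_of_gt hlam) (ne_of_gt hT)]
    rw [hLdef, hc2def]; linarith
  have hLq : -Real.log q ≤ K1 := by
    have h1 : Real.log (lam / (lam + mu)) ≤ Real.log q :=
      Real.log_le_log (by positivity) hqge
    have h2 : Real.log (lam / (lam + mu)) = Real.log lam - Real.log (lam + mu) :=
      Real.log_div (ne_of_gt hlam) (by positivity)
    rw [hK1def]; linarith
  -- I1 bounds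
  have hA₁ : I1 lam mu T u y₁ ≤ (y₁ - u) * (L + c2) + u * K1 := by
    have h := I1_upper hlam hmu hT hu hup₁ (by linarith)
    have h1 : (y₁ - u) * (-Real.log p) ≤ (y₁ - u) * (L + c2) :=
      mul_le_mul_of_nonneg_left hLp (by linarith)
    have h2 : u * (-Real.log q) ≤ u * K1 := mul_le_mul_of_nonneg_left hLq hu
    rw [← hpdef, ← hqdef] at h
    linarith
  have hA₂ : I1 lam mu T u y₂ ≤ (y₂ - u) * (L + c2) + u * K1 := by
    have h := I1_upper hlam hmu hT hu hup₂ (by linarith)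
    have h1 : (y₂ - u) * (-Real.log p) ≤ (y₂ - u) * (L + c2) :=
      mul_le_mul_of_nonneg_left hLp (by linarith)
    have h2 : u * (-Real.log q) ≤ u * K1 := mul_le_mul_of_nonneg_left hLq hu
    rw [← hpdef, ← hqdef] at h
    linarith
  have hB : (r - u) * L - C1 ≤ I1 lam mu T u r := by
    have := I1_lower hlam hmu hT hT1 hu hupr (le_of_lt hr1)
    rw [← hLdef, ← hC1def] at this
    exact this
  -- convexity chain
  obtain ⟨hconv, hlepsi, -⟩ := hmin
  have ha_mem : a ∈ Set.Icc (0:ℝ) 1 :=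
    ⟨pow_nonneg hy₁0 d, pow_le_one₀ hy₁0 (by linarith)⟩
  have hb_mem : b ∈ Set.Icc (0:ℝ) 1 :=
    ⟨pow_nonneg hy₂0 d, pow_le_one₀ hy₂0 (by linarith)⟩
  have hchord : psihat (r ^ d) ≤ θ * psihat a + (1 - θ) * psihat b := by
    have h := hconv.2 ha_mem hb_mem hθ0.le h1θ (by ring)
    simp only [smul_eq_mul] at h
    rwa [hcomb] at h
  have hroot₁ : (a : ℝ) ^ (1 / (d:ℝ)) = y₁ := by
    rw [one_div, hadef]; exact Real.pow_rpow_inv_natCast hy₁0 hd0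
  have hroot₂ : (b : ℝ) ^ (1 / (d:ℝ)) = y₂ := by
    rw [one_div, hbdef]; exact Real.pow_rpow_inv_natCast hy₂0 hd0
  have hrootr : ((r : ℝ) ^ d) ^ (1 / (d:ℝ)) = r := by
    rw [one_div]; exact Real.pow_rpow_inv_natCast hr0 hd0
  have hpa : psihat a ≤ I1 lam mu T u y₁ := by
    simpa only [hroot₁] using hlepsi a ha_mem
  have hpb : psihat b ≤ I1 lam mu T u y₂ := by
    simpa only [hroot₂] using hlepsi b hb_mem
  rw [hrootr]
  have hkey : (s - u) * (L + c2) + u * K1 < (r - u) * L - C1 := by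
    have hM0 : M ≤ max M 0 := le_max_left M 0
    have hδL : δ * L = r * L - s * L := by rw [hδdef]; ring
    linarith [hLM, hδL, hMdef, hM0]
  have hsum1 : θ * ((y₁ - u) * (L + c2) + u * K1) + (1 - θ) * ((y₂ - u) * (L + c2) + u * K1)
      = (s - u) * (L + c2) + u * K1 := by rw [hsdef]; ring
  have h1 : θ * psihat a ≤ θ * ((y₁ - u) * (L + c2) + u * K1) :=
    mul_le_mul_of_nonneg_left (hpa.trans hA₁) hθ0.le
  have h2 : (1 - θ) * psihat b ≤ (1 - θ) * ((y₂ - u) * (L + c2) + u * K1) :=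
    mul_le_mul_of_nonneg_left (hpb.trans hA₂) h1θ
  calc psihat (r ^ d) ≤ θ * psihat a + (1 - θ) * psihat b := hchord
    _ ≤ (s - u) * (L + c2) + u * K1 := by rw [← hsum1]; linarith
    _ < (r - u) * L - C1 := hkey
    _ ≤ I1 lam mu T u r := hB
end
end
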